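/- Let z be a nonzero real number, let a be a real number that is not a nonpositive integer, and let d ≥ 1 be an integer. If c is a real number and there exists a polynomial q with real coefficients such that for every integer n ≥ 0, ∑_{k=0}^{n−1} (k^d − c)·z^k·a^{(k)} = q(n)·z^n·a^{(n)} − q(0), then c equals the d-th iterated derivative at 0 of g_{a,z}(x) = exp(1/z − a·x − (1/z)·e^{−x}). -/

import Mathlib

/-- Rising factorial `a^{(k)} = a (a+1) ⋯ (a+k-1)` of a real number. -/
def risingFactorial (a : ℝ) : ℕ → ℝ
  | 0 => 1
  | k + 1 => risingFactorial a k * (a + k)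

/-!
Write `L p = (p(D) g)(0)` with `D = d/dx` and `g = g_{a,z}`; `L` is linear on `ℝ[X]`.
Since `g' = (-a + e^{-x}/z) g`, we have `z (D + a) g = e^{-x} g`, and
`p(D) (e^{-x} f) = e^{-x} p(D - 1) f` turns this into `L (z (X + a) p) = L (p (X - 1))`.
Differencing the hypothesis in `n` and cancelling `z^n a^{(n)} ≠ 0` gives
`z (X + a) q(X + 1) - q = X^d - c` at every natural number, hence as polynomials. Applying `L`
kills the left side, so `0 = g^{(d)}(0) - c g(0) = g^{(d)}(0) - c`.
-/

open Polynomial Real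
open scoped ContDiff

section DerivEval

variable {𝕜 : Type*} [NontriviallyNormedField 𝕜]

/-- `derivEval f x p` is `(p(d/dx) f)(x)`. -/
noncomputable def derivEval (f : 𝕜 → 𝕜) (x : 𝕜) : 𝕜[X] →ₗ[𝕜] 𝕜 :=
  lsum fun n => LinearMap.mulRight 𝕜 (iteratedDeriv n f x)

@[simp]
lemma derivEval_monomial (f : 𝕜 → 𝕜) (x : 𝕜) (n : ℕ) (b : 𝕜) :
    derivEval f x (monomial n b) = b * iteratedDeriv n f x := by
  simp [derivEval]

lemma derivEval_C (f : 𝕜 → 𝕜) (x b : 𝕜) : derivEval f x (C b) = b * f x := by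
  simp [← monomial_zero_left]

lemma derivEval_X_pow (f : 𝕜 → 𝕜) (x : 𝕜) (n : ℕ) :
    derivEval f x (X ^ n) = iteratedDeriv n f x := by
  simp [X_pow_eq_monomial]

lemma derivEval_C_mul (f : 𝕜 → 𝕜) (x b : 𝕜) (p : 𝕜[X]) :
    derivEval f x (C b * p) = b * derivEval f x p := by
  rw [← smul_eq_C_mul, map_smul, smul_eq_mul]

lemma derivEval_mul_X (f : 𝕜 → 𝕜) (x : 𝕜) (p : 𝕜[X]) :
    derivEval f x (p * X) = derivEval (deriv f) x p := by
  induction p using Polynomial.induction_on' with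
  | add p q hp hq => rw [add_mul, map_add, map_add, hp, hq]
  | monomial n b =>
    rw [monomial_mul_X, derivEval_monomial, derivEval_monomial, iteratedDeriv_succ']

lemma derivEval_add {f g : 𝕜 → 𝕜} (hf : ContDiff 𝕜 ∞ f) (hg : ContDiff 𝕜 ∞ g) (x : 𝕜)
    (p : 𝕜[X]) : derivEval (fun y => f y + g y) x p = derivEval f x p + derivEval g x p := by
  induction p using Polynomial.induction_on' with
  | add p q hp hq => rw [map_add, map_add, map_add, hp, hq]; ring
  | monomial n b =>
    simp only [derivEval_monomial]
    rw [iteratedDeriv_fun_add (hf.contDiffAt.of_le (mod_cast le_top))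
      (hg.contDiffAt.of_le (mod_cast le_top)), mul_add]

lemma derivEval_sub {f g : 𝕜 → 𝕜} (hf : ContDiff 𝕜 ∞ f) (hg : ContDiff 𝕜 ∞ g) (x : 𝕜)
    (p : 𝕜[X]) : derivEval (fun y => f y - g y) x p = derivEval f x p - derivEval g x p := by
  induction p using Polynomial.induction_on' with
  | add p q hp hq => rw [map_add, map_add, map_add, hp, hq]; ring
  | monomial n b =>
    simp only [derivEval_monomial]
    rw [iteratedDeriv_fun_sub (hf.contDiffAt.of_le (mod_cast le_top))
      (hg.contDiffAt.of_le (mod_cast le_top)), mul_sub]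

lemma derivEval_const_mul (f : 𝕜 → 𝕜) (x c : 𝕜) (p : 𝕜[X]) :
    derivEval (fun y => c * f y) x p = c * derivEval f x p := by
  induction p using Polynomial.induction_on' with
  | add p q hp hq => rw [map_add, map_add, hp, hq, mul_add]
  | monomial n b => simp only [derivEval_monomial, iteratedDeriv_const_mul_field]; ring

end DerivEval

lemma deriv_exp_neg_mul {f : ℝ → ℝ} (hf : Differentiable ℝ f) :
    deriv (fun y => exp (-y) * f y) = fun y => exp (-y) * deriv f y - exp (-y) * f y := by
  funext y
  have he : HasDerivAt (fun y : ℝ => exp (-y)) (-exp (-y)) y := by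
    simpa using (hasDerivAt_neg y).exp
  rw [(he.fun_mul (hf y).hasDerivAt).deriv]
  ring

lemma derivEval_exp_neg_mul {f : ℝ → ℝ} (hf : ContDiff ℝ ∞ f) (x : ℝ) (p : ℝ[X]) :
    derivEval (fun y => exp (-y) * f y) x p = exp (-x) * derivEval f x (p.comp (X - 1)) := by
  induction p using Polynomial.induction_on generalizing f with
  | C b => rw [C_comp, derivEval_C, derivEval_C]; ring
  | add p q hp hq => rw [map_add, hp hf, hq hf, add_comp, map_add, mul_add]
  | monomial n b ih =>
    obtain ⟨hf_diff, hf'⟩ := contDiff_infty_iff_deriv.mp hf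
    have hexp : ContDiff ℝ ∞ fun y : ℝ => exp (-y) := by fun_prop
    have hcomp : (C b * X ^ n * X).comp (X - 1) =
        (C b * X ^ n).comp (X - 1) * X - (C b * X ^ n).comp (X - 1) := by
      simp only [mul_comp, C_comp, pow_comp, X_comp]; ring
    rw [pow_succ, ← mul_assoc, derivEval_mul_X, deriv_exp_neg_mul hf_diff,
      derivEval_sub (hexp.mul hf') (hexp.mul hf), ih hf', ih hf, hcomp, map_sub,
      derivEval_mul_X]
    ring

noncomputable def gFun (a z : ℝ) (x : ℝ) : ℝ :=
  exp (1 / z - a * x - (1 / z) * exp (-x))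

lemma gFun_zero (a z : ℝ) : gFun a z 0 = 1 := by
  simp [gFun]

lemma contDiff_gFun (a z : ℝ) : ContDiff ℝ ∞ (gFun a z) := by
  unfold gFun; fun_prop

lemma hasDerivAt_gFun (a z x : ℝ) :
    HasDerivAt (gFun a z) ((-a + (1 / z) * exp (-x)) * gFun a z x) x := by
  have hexp : HasDerivAt (fun y : ℝ => exp (-y)) (-exp (-x)) x := by
    simpa using (hasDerivAt_neg x).exp
  have hexponent : HasDerivAt (fun y : ℝ => 1 / z - a * y - (1 / z) * exp (-y))
      (-a + (1 / z) * exp (-x)) x :=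
    ((((hasDerivAt_id' x).const_mul a).const_sub (1 / z)).fun_sub
      (hexp.const_mul (1 / z))).congr_deriv (by ring)
  rw [mul_comm]
  exact hexponent.exp

lemma exp_neg_mul_gFun {z : ℝ} (hz : z ≠ 0) (a : ℝ) :
    (fun y => exp (-y) * gFun a z y) = fun y => z * (deriv (gFun a z) y + a * gFun a z y) := by
  funext y
  rw [(hasDerivAt_gFun a z y).deriv]
  field_simp
  ring

lemma derivEval_gFun_mul {z : ℝ} (hz : z ≠ 0) (a : ℝ) (p : ℝ[X]) :
    derivEval (gFun a z) 0 (C z * (X + C a) * p) =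
      derivEval (gFun a z) 0 (p.comp (X - 1)) := by
  have hg := contDiff_gFun a z
  have h := derivEval_exp_neg_mul hg 0 p
  rw [exp_neg_mul_gFun hz, derivEval_const_mul,
    derivEval_add (contDiff_infty_iff_deriv.mp hg).2 (contDiff_const.mul hg),
    derivEval_const_mul, neg_zero, exp_zero, one_mul] at h
  rw [← h, mul_assoc, add_mul, mul_add, map_add, derivEval_C_mul, derivEval_C_mul, derivEval_C_mul,
    mul_comm X, derivEval_mul_X, mul_add]

lemma risingFactorial_ne_zero {a : ℝ} (ha : ∀ m : ℕ, a ≠ -(m : ℝ)) (n : ℕ) :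
    risingFactorial a n ≠ 0 := by
  induction n with
  | zero => exact one_ne_zero
  | succ n ih =>
    refine mul_ne_zero ih fun h => ha n ?_
    linarith

lemma eval_recurrence_of_sum_eq {z a c : ℝ} {d : ℕ} (hz : z ≠ 0) (ha : ∀ m : ℕ, a ≠ -(m : ℝ))
    {q : ℝ[X]} (hq : ∀ n : ℕ,
      ∑ k ∈ Finset.range n, (((k : ℝ) ^ d - c) * z ^ k * risingFactorial a k) =
        q.eval (n : ℝ) * z ^ n * risingFactorial a n - q.eval 0) (n : ℕ) :
    z * (a + n) * q.eval ((n : ℝ) + 1) - q.eval (n : ℝ) = (n : ℝ) ^ d - c := by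
  have hstep := hq (n + 1)
  rw [Finset.sum_range_succ, hq n] at hstep
  have hw : z ^ n * risingFactorial a n ≠ 0 :=
    mul_ne_zero (pow_ne_zero n hz) (risingFactorial_ne_zero ha n)
  apply mul_right_cancel₀ hw
  rw [risingFactorial, pow_succ] at hstep
  push_cast at hstep
  linear_combination -hstep

lemma shift_identity_of_forall_natCast {z a c : ℝ} {d : ℕ} {q : ℝ[X]}
    (hrec : ∀ n : ℕ, z * (a + n) * q.eval ((n : ℝ) + 1) - q.eval (n : ℝ) = (n : ℝ) ^ d - c) :
    C z * (X + C a) * q.comp (X + 1) - q = X ^ d - C c := by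
  refine eq_of_infinite_eval_eq _ _ <| Set.infinite_of_injective_forall_mem
    (f := fun n : ℕ => (n : ℝ)) Nat.cast_injective fun n => ?_
  simp only [Set.mem_ofPred_eq, eval_sub, eval_mul, eval_add, eval_pow, eval_comp, eval_X, eval_C,
    eval_one]
  linear_combination hrec n

theorem stmt_13 (z a : ℝ) (hz : z ≠ 0) (ha : ∀ m : ℕ, a ≠ -(m : ℝ)) (d : ℕ)
    (c : ℝ)
    (h : ∃ q : Polynomial ℝ, ∀ n : ℕ,
      ∑ k ∈ Finset.range n, (((k : ℝ) ^ d - c) * z ^ k * risingFactorial a k) =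
        q.eval (n : ℝ) * z ^ n * risingFactorial a n - q.eval 0) :
    c = iteratedDeriv d (fun x : ℝ => Real.exp (1 / z - a * x - (1 / z) * Real.exp (-x))) 0 := by
  obtain ⟨q, hq⟩ := h
  have hshift := shift_identity_of_forall_natCast (eval_recurrence_of_sum_eq hz ha hq)
  have hvanish : derivEval (gFun a z) 0 (X ^ d - C c) = 0 := by
    rw [← hshift, map_sub, derivEval_gFun_mul hz, comp_assoc]
    simp
  rw [map_sub, derivEval_X_pow, derivEval_C, gFun_zero, mul_one, sub_eq_zero] at hvanish
  exact hvanish.symm
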